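/- Let f : ℂ → Mat(n,ℂ) be differentiable at λ and suppose d(λ) = det(I + f(λ)) ≠ 0. Define D(λ) = adj(I + f(λ)). Then D'(λ) = (D(λ)/d(λ)) · (d'(λ) · I − f'(λ) · D(λ)). -/

import Mathlib

theorem aux_det_diff {m : Type*} [Fintype m] [DecidableEq m] (M : ℂ → Matrix m m ℂ) (l : ℂ)
    (h : ∀ i j, DifferentiableAt ℂ (fun z => M z i j) l) :
    DifferentiableAt ℂ (fun z => (M z).det) l := by
  simp only [Matrix.det_apply']
  apply DifferentiableAt.fun_sum
  intro σ _
  exact ((DifferentiableAt.fun_finsetProd (fun i _ => h (σ i) i))).const_mul _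

/-- Finite-dimensional second parameter imbedding equation:
with `d(λ) = det (I + f(λ))`, `D(λ) = adj (I + f(λ))`, and `d(λ) ≠ 0`,
`D'(λ) = (D(λ)/d(λ)) · (d'(λ)·I − f'(λ)·D(λ))`. -/
theorem stmt3 {n : ℕ} (f : ℂ → Matrix (Fin n) (Fin n) ℂ)
    (f' : Matrix (Fin n) (Fin n) ℂ) (l : ℂ) (d' : ℂ)
    (hf : ∀ i j, HasDerivAt (fun z => f z i j) (f' i j) l)
    (hd : HasDerivAt (fun z => (1 + f z).det) d' l)
    (hne : (1 + f l).det ≠ 0) :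
    ∀ i j, HasDerivAt (fun z => (1 + f z).adjugate i j)
      ((((1 + f l).det)⁻¹ •
        ((1 + f l).adjugate * (d' • (1 : Matrix (Fin n) (Fin n) ℂ)
          - f' * (1 + f l).adjugate))) i j) l := by
  have hA : ∀ i j, HasDerivAt (fun z => (1 + f z) i j) (f' i j) l := by
    intro i j
    simp only [Matrix.add_apply]
    exact (hf i j).const_add ((1 : Matrix (Fin n) (Fin n) ℂ) i j)
  -- differentiability of adjugate entries
  have hdiff : ∀ i j, DifferentiableAt ℂ (fun z => (1 + f z).adjugate i j) l := by
    intro i j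
    simp only [Matrix.adjugate_apply]
    apply aux_det_diff
    intro a b
    simp only [Matrix.updateRow_apply]
    by_cases hab : a = j
    · simp [hab]
    · simp only [hab, if_false]
      exact (hA a b).differentiableAt
  set g : Matrix (Fin n) (Fin n) ℂ :=
    Matrix.of (fun i j => deriv (fun z => (1 + f z).adjugate i j) l) with hgdef
  have hg : ∀ i j, HasDerivAt (fun z => (1 + f z).adjugate i j) (g i j) l :=
    fun i j => (hdiff i j).hasDerivAt
  -- key identity from differentiating adj(A) * A = det A • 1
  have hkey : g * (1 + f l) + (1 + f l).adjugate * f' = d' • (1 : Matrix (Fin n) (Fin n) ℂ) := by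
    ext i j
    have h1 := HasDerivAt.fun_sum (u := Finset.univ)
      fun k (_ : k ∈ Finset.univ) => ((hg i k).mul (hA k j))
    have h2 : HasDerivAt (fun y => ∑ k, (1 + f y).adjugate i k * (1 + f y) k j)
        (d' * (1 : Matrix (Fin n) (Fin n) ℂ) i j) l := by
      have heq : (fun y => ∑ k, (1 + f y).adjugate i k * (1 + f y) k j)
          = fun y => (1 + f y).det * (1 : Matrix (Fin n) (Fin n) ℂ) i j := by
        funext y
        rw [← Matrix.mul_apply, Matrix.adjugate_mul, Matrix.smul_apply, smul_eq_mul]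
      rw [heq]
      exact hd.mul_const _
    have h3 := h1.unique h2
    simp only [Matrix.add_apply, Matrix.mul_apply, Matrix.smul_apply, smul_eq_mul,
      ← Finset.sum_add_distrib]
    exact h3
  -- solve for g
  have hsolve : (1 + f l).det • g =
      d' • (1 + f l).adjugate - (1 + f l).adjugate * f' * (1 + f l).adjugate := by
    have := congrArg (fun M => M * (1 + f l).adjugate) hkey
    rw [add_mul, mul_assoc g, Matrix.mul_adjugate, Matrix.mul_smul, Matrix.mul_one,
      Matrix.smul_mul, Matrix.one_mul] at this
    rw [eq_sub_iff_add_eq]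
    exact this
  intro i j
  have hgoal : (((1 + f l).det)⁻¹ •
      ((1 + f l).adjugate * (d' • (1 : Matrix (Fin n) (Fin n) ℂ)
        - f' * (1 + f l).adjugate))) = g := by
    rw [Matrix.mul_sub, Matrix.mul_smul, Matrix.mul_one, ← mul_assoc, ← hsolve,
      smul_smul, inv_mul_cancel₀ hne, one_smul]
  rw [hgoal]
  exact hg i j
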